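/- In the setting of Lemma 1, define the penalized cost c̃(s,a) = c(s,a) + (γ L_C/(1−γ)) · max_{ξ∈Ξ} D_W(p_ξ(·|s,a), p*(·|s,a)), and let C̃_{p_ξ}(π) denote the expected discounted cumulative penalized cost under p_ξ. Then for every policy π, E_{ξ∼μ}[C̃_{p_ξ}(π)] ≥ C_{p*}(π). Consequently, if π̃ satisfies E_{ξ∼μ}[C̃_{p_ξ}(π̃)] ≤ d, then C_{p*}(π̃) ≤ d. -/
import Mathlib


open Finset

/-- State distribution at time `t` under kernel `p`, policy `π`, initial
distribution `ρ`. -/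
def stDist {S A : Type} [Fintype S] [Fintype A]
    (p : S → A → S → ℝ) (π : S → A → ℝ) (ρ : S → ℝ) : ℕ → S → ℝ
  | 0 => ρ
  | t + 1 => fun s' => ∑ s, ∑ a, stDist p π ρ t s * π s a * p s a s'

/-- Discounted value function for cost `c`, starting from state `s`. -/
noncomputable def Vval {S A : Type} [Fintype S] [Fintype A] [DecidableEq S]
    (γ : ℝ) (p : S → A → S → ℝ) (π : S → A → ℝ) (c : S → A → ℝ) (s : S) : ℝ :=
  ∑' t : ℕ, γ ^ t *
    ∑ s', stDist p π (fun x => if x = s then (1 : ℝ) else 0) t s' *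
      ∑ a, π s' a * c s' a

/-- Expected discounted cumulative cost from initial distribution `ρ`. -/
noncomputable def Cval {S A : Type} [Fintype S] [Fintype A] [DecidableEq S]
    (γ : ℝ) (p : S → A → S → ℝ) (π : S → A → ℝ) (c : S → A → ℝ) (ρ : S → ℝ) : ℝ :=
  ∑ s, ρ s * Vval γ p π c s

/-- Normalized discounted state-action occupancy measure. -/
noncomputable def occ {S A : Type} [Fintype S] [Fintype A]
    (γ : ℝ) (p : S → A → S → ℝ) (π : S → A → ℝ) (ρ : S → ℝ) (s : S) (a : A) : ℝ :=
  (1 - γ) * π s a * ∑' t : ℕ, γ ^ t * stDist p π ρ t s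

/-- L1-Wasserstein distance between pmfs on a finite space, with ground
distance `d`. -/
noncomputable def DW {S : Type} [Fintype S] (d : S → S → ℝ) (μ ν : S → ℝ) : ℝ :=
  sInf {w : ℝ | ∃ κ : S → S → ℝ, (∀ x y, 0 ≤ κ x y) ∧
    (∀ x, ∑ y, κ x y = μ x) ∧ (∀ y, ∑ x, κ x y = ν y) ∧
    w = ∑ x, ∑ y, κ x y * d x y}

section
variable {S A : Type} [Fintype S] [Fintype A]
  (p : S → A → S → ℝ) (π : S → A → ℝ) (ρ : S → ℝ)

lemma stDist_nonneg (hρ0 : ∀ s, 0 ≤ ρ s) (hπ0 : ∀ s a, 0 ≤ π s a)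
    (hp0 : ∀ s a s', 0 ≤ p s a s') : ∀ t s, 0 ≤ stDist p π ρ t s := by
  intro t
  induction t with
  | zero => exact hρ0
  | succ t ih =>
    intro s'
    refine Finset.sum_nonneg fun s _ => Finset.sum_nonneg fun a _ => ?_
    exact mul_nonneg (mul_nonneg (ih s) (hπ0 s a)) (hp0 s a s')

lemma stDist_sum (hπ1 : ∀ s, ∑ a, π s a = 1) (hp1 : ∀ s a, ∑ s', p s a s' = 1) :
    ∀ t, ∑ s, stDist p π ρ t s = ∑ s, ρ s := by
  intro t
  induction t with
  | zero => rfl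
  | succ t ih =>
    show ∑ s', ∑ s, ∑ a, stDist p π ρ t s * π s a * p s a s' = _
    rw [Finset.sum_comm]
    calc ∑ s, ∑ s', ∑ a, stDist p π ρ t s * π s a * p s a s'
        = ∑ s, stDist p π ρ t s := by
          refine Finset.sum_congr rfl fun s _ => ?_
          rw [Finset.sum_comm]
          have h1 : ∀ a, ∑ s', stDist p π ρ t s * π s a * p s a s'
              = stDist p π ρ t s * π s a := by
            intro a; rw [← Finset.mul_sum, hp1, mul_one]
          rw [Finset.sum_congr rfl fun a _ => h1 a, ← Finset.mul_sum, hπ1, mul_one]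
      _ = ∑ s, ρ s := ih

lemma stDist_shift : ∀ t, stDist p π ρ (t + 1) = stDist p π (stDist p π ρ 1) t := by
  intro t
  induction t with
  | zero => rfl
  | succ t ih =>
    funext s'
    show ∑ s, ∑ a, stDist p π ρ (t+1) s * π s a * p s a s' = _
    rw [ih]; rfl

lemma stDist_linear [DecidableEq S] : ∀ t s',
    stDist p π ρ t s' =
      ∑ s₀, ρ s₀ * stDist p π (fun x => if x = s₀ then (1:ℝ) else 0) t s' := by
  intro t
  induction t with
  | zero =>
    intro s'
    show ρ s' = ∑ s₀, ρ s₀ * (if s' = s₀ then (1:ℝ) else 0)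
    simp
  | succ t ih =>
    intro s'
    show ∑ s, ∑ a, stDist p π ρ t s * π s a * p s a s' = _
    calc ∑ s, ∑ a, stDist p π ρ t s * π s a * p s a s'
        = ∑ s, ∑ s₀, ∑ a, ρ s₀ * (stDist p π (fun x => if x = s₀ then (1:ℝ) else 0) t s * π s a * p s a s') := by
          refine Finset.sum_congr rfl fun s _ => ?_
          rw [Finset.sum_comm]
          refine Finset.sum_congr rfl fun a _ => ?_
          rw [ih, Finset.sum_mul, Finset.sum_mul]
          exact Finset.sum_congr rfl fun s₀ _ => by ring
      _ = ∑ s₀, ∑ s, ∑ a, ρ s₀ * (stDist p π (fun x => if x = s₀ then (1:ℝ) else 0) t s * π s a * p s a s') :=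
          Finset.sum_comm
      _ = ∑ s₀, ρ s₀ * ∑ s, ∑ a, stDist p π (fun x => if x = s₀ then (1:ℝ) else 0) t s * π s a * p s a s' := by
          refine Finset.sum_congr rfl fun s₀ _ => ?_
          rw [Finset.mul_sum]
          exact Finset.sum_congr rfl fun s _ => by rw [Finset.mul_sum]
      _ = _ := rfl
end

section
variable {S : Type} [Fintype S] [MetricSpace S] (μ ν : S → ℝ)

lemma prod_coupling_mem (hμ0 : ∀ x, 0 ≤ μ x) (hμ1 : ∑ x, μ x = 1)
    (hν0 : ∀ x, 0 ≤ ν x) (hν1 : ∑ x, ν x = 1) :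
    (∑ x, ∑ y, (μ x * ν y) * dist x y) ∈
      {w : ℝ | ∃ κ : S → S → ℝ, (∀ x y, 0 ≤ κ x y) ∧
        (∀ x, ∑ y, κ x y = μ x) ∧ (∀ y, ∑ x, κ x y = ν y) ∧
        w = ∑ x, ∑ y, κ x y * dist x y} := by
  refine ⟨fun x y => μ x * ν y, fun x y => mul_nonneg (hμ0 x) (hν0 y), ?_, ?_, rfl⟩
  · intro x; rw [← Finset.mul_sum, hν1, mul_one]
  · intro y
    have : ∑ x, μ x * ν y = (∑ x, μ x) * ν y := (Finset.sum_mul ..).symm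
    rw [this, hμ1, one_mul]

lemma DW_elem_nonneg {w : ℝ}
    (hw : w ∈ {w : ℝ | ∃ κ : S → S → ℝ, (∀ x y, 0 ≤ κ x y) ∧
        (∀ x, ∑ y, κ x y = μ x) ∧ (∀ y, ∑ x, κ x y = ν y) ∧
        w = ∑ x, ∑ y, κ x y * dist x y}) : 0 ≤ w := by
  obtain ⟨κ, hκ0, -, -, rfl⟩ := hw
  exact Finset.sum_nonneg fun x _ => Finset.sum_nonneg fun y _ =>
    mul_nonneg (hκ0 x y) dist_nonneg

lemma DW_nonneg : 0 ≤ DW dist μ ν :=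
  Real.sInf_nonneg (fun w hw => DW_elem_nonneg μ ν hw)

lemma DW_dual (f : S → ℝ) (L : ℝ)
    (hμ0 : ∀ x, 0 ≤ μ x) (hμ1 : ∑ x, μ x = 1)
    (hν0 : ∀ x, 0 ≤ ν x) (hν1 : ∑ x, ν x = 1)
    (hf : ∀ x y, |f x - f y| ≤ L * dist x y) :
    (∑ y, ν y * f y) - (∑ x, μ x * f x) ≤ L * DW dist μ ν := by
  set D := {w : ℝ | ∃ κ : S → S → ℝ, (∀ x y, 0 ≤ κ x y) ∧
    (∀ x, ∑ y, κ x y = μ x) ∧ (∀ y, ∑ x, κ x y = ν y) ∧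
    w = ∑ x, ∑ y, κ x y * dist x y} with hD
  have hne : D.Nonempty := ⟨_, prod_coupling_mem μ ν hμ0 hμ1 hν0 hν1⟩
  have hbdd : BddBelow D := ⟨0, fun w hw => DW_elem_nonneg μ ν hw⟩
  have key : ∀ w ∈ D, (∑ y, ν y * f y) - (∑ x, μ x * f x) ≤ L * w := by
    rintro w ⟨κ, hκ0, hκμ, hκν, rfl⟩
    have hν' : ∑ y, ν y * f y = ∑ x, ∑ y, κ x y * f y := by
      rw [Finset.sum_comm]
      refine Finset.sum_congr rfl fun y _ => ?_
      rw [← hκν y, Finset.sum_mul]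
    have hμ' : ∑ x, μ x * f x = ∑ x, ∑ y, κ x y * f x := by
      refine Finset.sum_congr rfl fun x _ => ?_
      rw [← hκμ x, Finset.sum_mul]
    rw [hν', hμ', ← Finset.sum_sub_distrib, Finset.mul_sum]
    refine Finset.sum_le_sum fun x _ => ?_
    rw [← Finset.sum_sub_distrib, Finset.mul_sum]
    refine Finset.sum_le_sum fun y _ => ?_
    rw [← mul_sub]
    have h1 : f y - f x ≤ L * dist x y := by
      have := hf y x
      rw [dist_comm] at this
      exact le_trans (le_abs_self _) this
    calc κ x y * (f y - f x) ≤ κ x y * (L * dist x y) :=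
          mul_le_mul_of_nonneg_left h1 (hκ0 x y)
      _ = L * (κ x y * dist x y) := by ring
  have hDW : DW dist μ ν = sInf D := rfl
  rcases le_or_gt L 0 with hL | hL
  · obtain ⟨w₀, hw₀⟩ := hne
    calc (∑ y, ν y * f y) - (∑ x, μ x * f x) ≤ L * w₀ := key w₀ hw₀
      _ ≤ L * sInf D := mul_le_mul_of_nonpos_left (csInf_le hbdd hw₀) hL
      _ = L * DW dist μ ν := by rw [hDW]
  · rw [hDW]
    have : ((∑ y, ν y * f y) - (∑ x, μ x * f x)) / L ≤ sInf D := by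
      refine le_csInf hne fun w hw => ?_
      rw [div_le_iff₀ hL, mul_comm]
      exact key w hw
    calc (∑ y, ν y * f y) - (∑ x, μ x * f x)
        = L * (((∑ y, ν y * f y) - (∑ x, μ x * f x)) / L) := by
          field_simp
      _ ≤ L * sInf D := mul_le_mul_of_nonneg_left this hL.le

lemma DW_subsingleton [Subsingleton S]
    (hμ0 : ∀ x, 0 ≤ μ x) (hμ1 : ∑ x, μ x = 1)
    (hν0 : ∀ x, 0 ≤ ν x) (hν1 : ∑ x, ν x = 1) : DW dist μ ν = 0 := by
  refine le_antisymm ?_ (DW_nonneg μ ν)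
  have hmem := prod_coupling_mem μ ν hμ0 hμ1 hν0 hν1
  have h0 : (∑ x, ∑ y, (μ x * ν y) * dist x y) = 0 := by
    refine Finset.sum_eq_zero fun x _ => Finset.sum_eq_zero fun y _ => ?_
    rw [Subsingleton.elim x y, dist_self, mul_zero]
  have hbdd : BddBelow {w : ℝ | ∃ κ : S → S → ℝ, (∀ x y, 0 ≤ κ x y) ∧
      (∀ x, ∑ y, κ x y = μ x) ∧ (∀ y, ∑ x, κ x y = ν y) ∧
      w = ∑ x, ∑ y, κ x y * dist x y} := ⟨0, fun w hw => DW_elem_nonneg μ ν hw⟩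
  calc DW dist μ ν ≤ ∑ x, ∑ y, (μ x * ν y) * dist x y := csInf_le hbdd hmem
    _ = 0 := h0

end

section
variable {S : Type} [Fintype S]

lemma summable_geo_mul {γ : ℝ} (hγ0 : 0 ≤ γ) (hγ1 : γ < 1) (f : ℕ → ℝ) (M : ℝ)
    (hf : ∀ t, |f t| ≤ M) : Summable (fun t => γ ^ t * f t) := by
  refine Summable.of_abs ?_
  refine Summable.of_nonneg_of_le (fun t => abs_nonneg _) (fun t => ?_)
    ((summable_geometric_of_lt_one hγ0 hγ1).mul_left M)
  rw [abs_mul, abs_pow, abs_of_nonneg hγ0, mul_comm]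
  exact mul_le_mul_of_nonneg_right (hf t) (pow_nonneg hγ0 t)

lemma weighted_abs_le {w h : S → ℝ} (hw0 : ∀ s, 0 ≤ w s) (hw1 : ∑ s, w s = 1) :
    |∑ s, w s * h s| ≤ ∑ s, |h s| := by
  calc |∑ s, w s * h s| ≤ ∑ s, |w s * h s| := Finset.abs_sum_le_sum_abs _ _
    _ ≤ ∑ s, |h s| := by
      refine Finset.sum_le_sum fun s _ => ?_
      rw [abs_mul, abs_of_nonneg (hw0 s)]
      have hw : w s ≤ 1 := hw1 ▸ Finset.single_le_sum (fun s _ => hw0 s) (mem_univ s)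
      nlinarith [abs_nonneg (h s)]
end


set_option linter.unusedSectionVars false

section
variable {S A : Type} [Fintype S] [Fintype A] [DecidableEq S]

lemma Vval_bellman (γ : ℝ) (hγ0 : 0 ≤ γ) (hγ1 : γ < 1)
    (p : S → A → S → ℝ) (π : S → A → ℝ) (c : S → A → ℝ)
    (hπ0 : ∀ s a, 0 ≤ π s a) (hπ1 : ∀ s, ∑ a, π s a = 1)
    (hp0 : ∀ s a s', 0 ≤ p s a s') (hp1 : ∀ s a, ∑ s', p s a s' = 1) (s : S) :
    Vval γ p π c s = (∑ a, π s a * c s a) +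
      γ * ∑ a, π s a * ∑ s', p s a s' * Vval γ p π c s' := by
  classical
  set cπ : S → ℝ := fun s' => ∑ a, π s' a * c s' a with hcπ
  set δ : S → S → ℝ := fun s₀ x => if x = s₀ then (1:ℝ) else 0 with hδ
  have hδ0 : ∀ s₀ x, 0 ≤ δ s₀ x := by
    intro s₀ x; dsimp [δ]; split <;> norm_num
  have hδ1 : ∀ s₀, ∑ x, δ s₀ x = 1 := by
    intro s₀; simp [δ]
  have hν0 : ∀ s₀ t s', 0 ≤ stDist p π (δ s₀) t s' :=
    fun s₀ => stDist_nonneg p π (δ s₀) (hδ0 s₀) hπ0 hp0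
  have hν1 : ∀ s₀ t, ∑ s', stDist p π (δ s₀) t s' = 1 := by
    intro s₀ t; rw [stDist_sum p π (δ s₀) hπ1 hp1 t, hδ1]
  set M : ℝ := ∑ s', |cπ s'| with hM
  have hbound : ∀ s₀ t, |∑ s', stDist p π (δ s₀) t s' * cπ s'| ≤ M :=
    fun s₀ t => weighted_abs_le (fun s' => hν0 s₀ t s') (hν1 s₀ t)
  have hsum : ∀ s₀ : S, Summable (fun t : ℕ =>
      γ ^ t * ∑ s', stDist p π (δ s₀) t s' * cπ s') :=
    fun s₀ => summable_geo_mul hγ0 hγ1 _ M (hbound s₀)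
  have hVval : ∀ s₀ : S, Vval γ p π c s₀ =
      ∑' t : ℕ, γ ^ t * ∑ s', stDist p π (δ s₀) t s' * cπ s' := fun s₀ => rfl
  rw [hVval s, Summable.tsum_eq_zero_add (hsum s)]
  have h0 : γ ^ 0 * ∑ s', stDist p π (δ s) 0 s' * cπ s' = cπ s := by
    rw [pow_zero, one_mul]
    show ∑ s', δ s s' * cπ s' = cπ s
    simp [δ]
  set w : S → ℝ := fun s₀ => ∑ a, π s a * p s a s₀ with hw
  have hρ' : ∀ s₀, stDist p π (δ s) 1 s₀ = w s₀ := by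
    intro s₀
    show ∑ s₁, ∑ a, δ s s₁ * π s₁ a * p s₁ a s₀ = w s₀
    rw [hw]
    rw [Finset.sum_eq_single s]
    · refine Finset.sum_congr rfl fun a _ => ?_
      simp [δ]
    · intro s₁ _ hne
      refine Finset.sum_eq_zero fun a _ => ?_
      simp [δ, hne]
    · intro h; exact absurd (Finset.mem_univ s) h
  have hshift : ∀ t : ℕ,
      γ ^ (t+1) * ∑ s', stDist p π (δ s) (t+1) s' * cπ s' =
      γ * ∑ s₀, w s₀ * (γ ^ t * ∑ s', stDist p π (δ s₀) t s' * cπ s') := by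
    intro t
    rw [stDist_shift]
    have h1 : ∑ s', stDist p π (stDist p π (δ s) 1) t s' * cπ s'
        = ∑ s₀, w s₀ * ∑ s', stDist p π (δ s₀) t s' * cπ s' := by
      calc ∑ s', stDist p π (stDist p π (δ s) 1) t s' * cπ s'
          = ∑ s', (∑ s₀, stDist p π (δ s) 1 s₀ * stDist p π (δ s₀) t s') * cπ s' := by
            refine Finset.sum_congr rfl fun s' _ => ?_
            rw [stDist_linear p π (stDist p π (δ s) 1) t s']
        _ = ∑ s₀, ∑ s', stDist p π (δ s) 1 s₀ * (stDist p π (δ s₀) t s' * cπ s') := by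
            rw [Finset.sum_comm]
            refine Finset.sum_congr rfl fun s' _ => ?_
            rw [Finset.sum_mul]
            exact Finset.sum_congr rfl fun s₀ _ => by ring
        _ = ∑ s₀, w s₀ * ∑ s', stDist p π (δ s₀) t s' * cπ s' := by
            refine Finset.sum_congr rfl fun s₀ _ => ?_
            rw [← Finset.mul_sum, hρ' s₀]
    rw [h1, pow_succ, Finset.mul_sum]
    rw [Finset.mul_sum]
    refine Finset.sum_congr rfl fun s₀ _ => by ring
  rw [tsum_congr hshift, tsum_mul_left, Summable.tsum_finsetSum
    (fun s₀ _ => ((hsum s₀).mul_left (w s₀)))]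
  have h2 : ∀ s₀ ∈ Finset.univ, (∑' t : ℕ, w s₀ *
      (γ ^ t * ∑ s', stDist p π (δ s₀) t s' * cπ s')) = w s₀ * Vval γ p π c s₀ := by
    intro s₀ _
    rw [tsum_mul_left, ← hVval s₀]
  rw [Finset.sum_congr rfl h2, h0]
  congr 1
  rw [hw]
  calc γ * ∑ s₀, (∑ a, π s a * p s a s₀) * Vval γ p π c s₀
      = γ * ∑ s₀, ∑ a, π s a * (p s a s₀ * Vval γ p π c s₀) := by
        congr 1
        refine Finset.sum_congr rfl fun s₀ _ => ?_
        rw [Finset.sum_mul]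
        exact Finset.sum_congr rfl fun a _ => by ring
    _ = γ * ∑ a, π s a * ∑ s', p s a s' * Vval γ p π c s' := by
        congr 1
        rw [Finset.sum_comm]
        exact Finset.sum_congr rfl fun a _ => by rw [← Finset.mul_sum]


lemma sum_kernel_rearrange (q : S → A → S → ℝ) (π : S → A → ℝ) (ν h : S → ℝ) :
    ∑ s'', (∑ s', ∑ a, ν s' * π s' a * q s' a s'') * h s''
      = ∑ s', ν s' * ∑ a, π s' a * ∑ s'', q s' a s'' * h s'' := by
  calc ∑ s'', (∑ s', ∑ a, ν s' * π s' a * q s' a s'') * h s''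
      = ∑ s'', ∑ s', ∑ a, ν s' * (π s' a * (q s' a s'' * h s'')) := by
        refine Finset.sum_congr rfl fun s'' _ => ?_
        rw [Finset.sum_mul]
        refine Finset.sum_congr rfl fun s' _ => ?_
        rw [Finset.sum_mul]
        exact Finset.sum_congr rfl fun a _ => by ring
    _ = ∑ s', ∑ s'', ∑ a, ν s' * (π s' a * (q s' a s'' * h s'')) := Finset.sum_comm
    _ = ∑ s', ν s' * ∑ a, π s' a * ∑ s'', q s' a s'' * h s'' := by
        refine Finset.sum_congr rfl fun s' _ => ?_
        rw [Finset.sum_comm, Finset.mul_sum]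
        refine Finset.sum_congr rfl fun a _ => ?_
        rw [Finset.mul_sum, Finset.mul_sum]

lemma Vval_le_of_subsolution (γ : ℝ) (hγ0 : 0 ≤ γ) (hγ1 : γ < 1)
    (q : S → A → S → ℝ) (π : S → A → ℝ) (ctil : S → A → ℝ) (V : S → ℝ)
    (hπ0 : ∀ s a, 0 ≤ π s a) (hπ1 : ∀ s, ∑ a, π s a = 1)
    (hq0 : ∀ s a s', 0 ≤ q s a s') (hq1 : ∀ s a, ∑ s', q s a s' = 1)
    (hsub : ∀ s, V s ≤ (∑ a, π s a * ctil s a) +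
      γ * ∑ a, π s a * ∑ s', q s a s' * V s') :
    ∀ s, V s ≤ Vval γ q π ctil s := by
  intro s
  classical
  set δ : S → ℝ := fun x => if x = s then (1:ℝ) else 0 with hδ
  have hδ0 : ∀ x, 0 ≤ δ x := by intro x; dsimp [δ]; split <;> norm_num
  have hδ1 : ∑ x, δ x = 1 := by simp [δ]
  set ν : ℕ → S → ℝ := stDist q π δ with hν
  have hν0 : ∀ t s', 0 ≤ ν t s' := stDist_nonneg q π δ hδ0 hπ0 hq0
  have hν1 : ∀ t, ∑ s', ν t s' = 1 := by
    intro t; rw [hν, stDist_sum q π δ hπ1 hq1 t, hδ1]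
  set cπ : S → ℝ := fun s' => ∑ a, π s' a * ctil s' a with hcπ
  set u : ℕ → ℝ := fun t => γ ^ t * ∑ s', ν t s' * cπ s' with hu
  have key : ∀ T : ℕ, V s ≤ (∑ t ∈ Finset.range T, u t) + γ ^ T * ∑ s', ν T s' * V s' := by
    intro T
    induction T with
    | zero =>
      have h0 : ∑ s', ν 0 s' * V s' = V s := by
        show ∑ s', δ s' * V s' = V s
        simp [δ]
      simp [h0]
    | succ T ih =>
      refine le_trans ih ?_
      rw [Finset.sum_range_succ]
      have hstep : γ ^ T * ∑ s', ν T s' * V s' ≤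
          γ ^ T * ∑ s', ν T s' * cπ s' + γ ^ (T+1) * ∑ s', ν (T+1) s' * V s' := by
        have h1 : ∑ s', ν T s' * V s' ≤
            ∑ s', ν T s' * (cπ s' + γ * ∑ a, π s' a * ∑ s'', q s' a s'' * V s'') := by
          refine Finset.sum_le_sum fun s' _ => ?_
          exact mul_le_mul_of_nonneg_left (hsub s') (hν0 T s')
        have h3 : ∑ s', ν (T+1) s' * V s'
            = ∑ s', ν T s' * ∑ a, π s' a * ∑ s'', q s' a s'' * V s'' := by
          show ∑ s'', (∑ s', ∑ a, ν T s' * π s' a * q s' a s'') * V s'' = _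
          exact sum_kernel_rearrange q π (ν T) V
        have h2 : ∑ s', ν T s' * (cπ s' + γ * ∑ a, π s' a * ∑ s'', q s' a s'' * V s'')
            = (∑ s', ν T s' * cπ s') + γ * ∑ s', ν (T+1) s' * V s' := by
          rw [h3, Finset.mul_sum, ← Finset.sum_add_distrib]
          exact Finset.sum_congr rfl fun s' _ => by ring
        calc γ ^ T * ∑ s', ν T s' * V s'
            ≤ γ ^ T * ((∑ s', ν T s' * cπ s') + γ * ∑ s', ν (T+1) s' * V s') := by
              rw [← h2]
              exact mul_le_mul_of_nonneg_left h1 (pow_nonneg hγ0 T)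
          _ = γ ^ T * ∑ s', ν T s' * cπ s' + γ ^ (T+1) * ∑ s', ν (T+1) s' * V s' := by
              rw [pow_succ]; ring
      have hu' : u T = γ ^ T * ∑ s', ν T s' * cπ s' := rfl
      rw [hu']
      linarith
  have hsumu : Summable u := by
    refine summable_geo_mul hγ0 hγ1 _ (∑ s', |cπ s'|) fun t => ?_
    exact weighted_abs_le (fun s' => hν0 t s') (hν1 t)
  have hVq : Vval γ q π ctil s = ∑' t, u t := rfl
  have h1 : Filter.Tendsto (fun T => ∑ t ∈ Finset.range T, u t)
      Filter.atTop (nhds (Vval γ q π ctil s)) := by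
    rw [hVq]
    exact hsumu.hasSum.tendsto_sum_nat
  have h2 : Filter.Tendsto (fun T => γ ^ T * ∑ s', ν T s' * V s')
      Filter.atTop (nhds 0) := by
    refine squeeze_zero_norm (a := fun T => (∑ s', |V s'|) * γ ^ T) (fun T => ?_) ?_
    · rw [Real.norm_eq_abs, abs_mul, abs_pow, abs_of_nonneg hγ0, mul_comm]
      exact mul_le_mul_of_nonneg_right
        (weighted_abs_le (fun s' => hν0 T s') (hν1 T)) (pow_nonneg hγ0 T)
    · have := (tendsto_pow_atTop_nhds_zero_of_lt_one (by linarith) hγ1).const_mul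
        (∑ s', |V s'|)
      simpa using this
  have h3 := h1.add h2
  rw [add_zero] at h3
  exact ge_of_tendsto' h3 key

end

/-- Safety guarantee (Theorem 2, core inequality): the averaged penalized
simulated cost upper-bounds the real cost; hence any policy satisfying the
penalized constraint is safe in the real environment. -/
theorem penalized_cost_safety {S A Ξ : Type} [Fintype S] [Fintype A]
    [Fintype Ξ] [Nonempty Ξ] [DecidableEq S] [MetricSpace S]
    (γ : ℝ) (hγ0 : 0 ≤ γ) (hγ1 : γ < 1)
    (pstar : S → A → S → ℝ) (psim : Ξ → S → A → S → ℝ)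
    (μ : Ξ → ℝ) (hμ0 : ∀ ξ, 0 ≤ μ ξ) (hμ1 : ∑ ξ, μ ξ = 1)
    (ρ : S → ℝ) (c : S → A → ℝ) (cmax : ℝ) (L : ℝ) (d : ℝ)
    (hp0 : ∀ s a s', 0 ≤ pstar s a s') (hp1 : ∀ s a, ∑ s', pstar s a s' = 1)
    (hq0 : ∀ ξ s a s', 0 ≤ psim ξ s a s')
    (hq1 : ∀ ξ s a, ∑ s', psim ξ s a s' = 1)
    (hρ0 : ∀ s, 0 ≤ ρ s) (hρ1 : ∑ s, ρ s = 1)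
    (hc0 : ∀ s a, 0 ≤ c s a) (hc1 : ∀ s a, c s a ≤ cmax)
    (hLip : ∀ π' : S → A → ℝ, (∀ s a, 0 ≤ π' s a) → (∀ s, ∑ a, π' s a = 1) →
      ∀ s s' : S,
        |Vval γ pstar π' c s - Vval γ pstar π' c s'| ≤ L * dist s s')
    -- the penalized cost function
    (ctil : S → A → ℝ)
    (hctil : ∀ s a, ctil s a = c s a +
      γ * L / (1 - γ) *
        Finset.univ.sup' Finset.univ_nonempty
          (fun ξ : Ξ => DW dist (psim ξ s a) (pstar s a))) :
    (∀ π : S → A → ℝ, (∀ s a, 0 ≤ π s a) → (∀ s, ∑ a, π s a = 1) →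
        Cval γ pstar π c ρ ≤ ∑ ξ, μ ξ * Cval γ (psim ξ) π ctil ρ) ∧
    (∀ π : S → A → ℝ, (∀ s a, 0 ≤ π s a) → (∀ s, ∑ a, π s a = 1) →
        (∑ ξ, μ ξ * Cval γ (psim ξ) π ctil ρ) ≤ d →
        Cval γ pstar π c ρ ≤ d) := by
  obtain ⟨ξ0⟩ := (inferInstance : Nonempty Ξ)
  have main : ∀ π : S → A → ℝ, (∀ s a, 0 ≤ π s a) → (∀ s, ∑ a, π s a = 1) →
      Cval γ pstar π c ρ ≤ ∑ ξ, μ ξ * Cval γ (psim ξ) π ctil ρ := by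
    intro π hπ0 hπ1
    have hGξ : ∀ ξ s a, DW dist (psim ξ s a) (pstar s a) ≤
        Finset.univ.sup' Finset.univ_nonempty
          (fun ξ : Ξ => DW dist (psim ξ s a) (pstar s a)) :=
      fun ξ s a => Finset.le_sup' (fun ξ : Ξ => DW dist (psim ξ s a) (pstar s a)) (Finset.mem_univ ξ)
    have hG0 : ∀ s a, 0 ≤ Finset.univ.sup' Finset.univ_nonempty
        (fun ξ : Ξ => DW dist (psim ξ s a) (pstar s a)) :=
      fun s a => le_trans (DW_nonneg (psim ξ0 s a) (pstar s a)) (hGξ ξ0 s a)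
    have hpen : ∀ ξ s a, γ * (L * DW dist (psim ξ s a) (pstar s a)) ≤
        γ * L / (1 - γ) * Finset.univ.sup' Finset.univ_nonempty
          (fun ξ : Ξ => DW dist (psim ξ s a) (pstar s a)) := by
      rcases subsingleton_or_nontrivial S with hS | hS
      · intro ξ s a
        have h1 : ∀ ξ' : Ξ, DW dist (psim ξ' s a) (pstar s a) = 0 := fun ξ' =>
          DW_subsingleton _ _ (hq0 ξ' s a) (hq1 ξ' s a) (hp0 s a) (hp1 s a)
        have h2 : Finset.univ.sup' Finset.univ_nonempty
            (fun ξ : Ξ => DW dist (psim ξ s a) (pstar s a)) = 0 :=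
          le_antisymm (Finset.sup'_le _ _ fun ξ' _ => le_of_eq (h1 ξ')) (hG0 s a)
        rw [h1 ξ, h2]
        simp
      · obtain ⟨s₀, s₁, hne⟩ := hS.exists_pair_ne
        have hL : 0 ≤ L := by
          have hd : 0 < dist s₀ s₁ := dist_pos.2 hne
          have h := hLip π hπ0 hπ1 s₀ s₁
          nlinarith [abs_nonneg (Vval γ pstar π c s₀ - Vval γ pstar π c s₁)]
        intro ξ s a
        have h1 : L * DW dist (psim ξ s a) (pstar s a) ≤
            L * Finset.univ.sup' Finset.univ_nonempty
              (fun ξ : Ξ => DW dist (psim ξ s a) (pstar s a)) :=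
          mul_le_mul_of_nonneg_left (hGξ ξ s a) hL
        have h2 : 0 < 1 - γ := by linarith
        rw [div_mul_eq_mul_div, le_div_iff₀ h2]
        have h3 : 0 ≤ L * DW dist (psim ξ s a) (pstar s a) :=
          mul_nonneg hL (DW_nonneg _ _)
        nlinarith [h1, h3, hγ0, mul_nonneg hγ0 h3]
      
    have hsub : ∀ ξ s, Vval γ pstar π c s ≤ (∑ a, π s a * ctil s a) +
        γ * ∑ a, π s a * ∑ s', psim ξ s a s' * Vval γ pstar π c s' := by
      intro ξ s
      have hbell := Vval_bellman γ hγ0 hγ1 pstar π c hπ0 hπ1 hp0 hp1 s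
      have hdual : ∀ a, (∑ s', pstar s a s' * Vval γ pstar π c s') -
          (∑ s', psim ξ s a s' * Vval γ pstar π c s') ≤
          L * DW dist (psim ξ s a) (pstar s a) := fun a =>
        DW_dual (psim ξ s a) (pstar s a) (Vval γ pstar π c) L
          (hq0 ξ s a) (hq1 ξ s a) (hp0 s a) (hp1 s a)
          (fun x y => hLip π hπ0 hπ1 x y)
      have hterm : ∀ a ∈ Finset.univ (α := A), π s a *
          (γ * ((∑ s', pstar s a s' * Vval γ pstar π c s') -
            (∑ s', psim ξ s a s' * Vval γ pstar π c s'))) ≤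
          π s a * (γ * L / (1 - γ) * Finset.univ.sup' Finset.univ_nonempty
            (fun ξ : Ξ => DW dist (psim ξ s a) (pstar s a))) := fun a _ =>
        mul_le_mul_of_nonneg_left
          (le_trans (mul_le_mul_of_nonneg_left (hdual a) hγ0) (hpen ξ s a))
          (hπ0 s a)
      have hsumterm := Finset.sum_le_sum hterm
      have hctil' : ∑ a, π s a * ctil s a = (∑ a, π s a * c s a) +
          ∑ a, π s a * (γ * L / (1 - γ) * Finset.univ.sup' Finset.univ_nonempty
            (fun ξ : Ξ => DW dist (psim ξ s a) (pstar s a))) := by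
        rw [← Finset.sum_add_distrib]
        refine Finset.sum_congr rfl fun a _ => ?_
        rw [hctil s a]
        ring
      have hsplit : ∑ a, π s a *
          (γ * ((∑ s', pstar s a s' * Vval γ pstar π c s') -
            (∑ s', psim ξ s a s' * Vval γ pstar π c s'))) =
          γ * (∑ a, π s a * ∑ s', pstar s a s' * Vval γ pstar π c s') -
          γ * (∑ a, π s a * ∑ s', psim ξ s a s' * Vval γ pstar π c s') := by
        rw [Finset.mul_sum, Finset.mul_sum, ← Finset.sum_sub_distrib]
        exact Finset.sum_congr rfl fun a _ => by ring
      rw [hbell, hctil']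
      rw [hsplit] at hsumterm
      linarith
    have hcore : ∀ ξ s, Vval γ pstar π c s ≤ Vval γ (psim ξ) π ctil s := fun ξ =>
      Vval_le_of_subsolution γ hγ0 hγ1 (psim ξ) π ctil (Vval γ pstar π c)
        hπ0 hπ1 (hq0 ξ) (hq1 ξ) (hsub ξ)
    have hCle : ∀ ξ, Cval γ pstar π c ρ ≤ Cval γ (psim ξ) π ctil ρ := by
      intro ξ
      exact Finset.sum_le_sum fun s _ =>
        mul_le_mul_of_nonneg_left (hcore ξ s) (hρ0 s)
    calc Cval γ pstar π c ρ = ∑ ξ, μ ξ * Cval γ pstar π c ρ := by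
          rw [← Finset.sum_mul, hμ1, one_mul]
      _ ≤ ∑ ξ, μ ξ * Cval γ (psim ξ) π ctil ρ :=
          Finset.sum_le_sum fun ξ _ => mul_le_mul_of_nonneg_left (hCle ξ) (hμ0 ξ)
  exact ⟨main, fun π h0 h1 hd => le_trans (main π h0 h1) hd⟩
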